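/- For each K ≥ 1, the set σ⁻¹(K) ∩ G = {(w_n) ∈ G : κ₁(w_n) = κ₁(w_K) for all n ≥ K, and either K = 1 or κ₁(w_{K−1}) ≠ κ₁(w_K)} has empty interior in G (with the subspace topology from lim← G_n); that is, it contains no nonempty open subset of G. -/

import Mathlib

/-!
Setting: `H 1, H 2, …` is a sequence of nontrivial groups (`H 0` is an unused dummy
factor).  `Gₙ = H 1 ∗ ⋯ ∗ H n` is realized canonically as the set of elements of the big
free product `Monoid.CoprodI H` whose reduced word only uses letters of type `i` with
`1 ≤ i ≤ n` (in particular `G₀` is trivial).  `ψ n : G (n+1) → G n` is realized as the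
homomorphism of the big free product which is the identity on each `H i` with `i ≤ n`
and kills all the other factors.  The inverse limit `lim← Gₙ` is the set of sequences
`f` with `f n ∈ Gₙ` and `ψ n (f (n+1)) = f n`; since each `Gₙ` is discrete it carries the
topology inherited from the product of discrete topologies (we give the big free product
the discrete topology `⊥`).
-/

noncomputable section

/-- The reduced word of an element of the free product, as a list of letters. -/
noncomputable def redWord {H : ℕ → Type*} [∀ i, Group (H i)] (g : Monoid.CoprodI H) :
    List (Σ i, H i) :=
  letI : ∀ i, DecidableEq (H i) := fun _ => Classical.decEq _
  (Monoid.CoprodI.Word.equiv g).toList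

/-- `kappa m g` : the (possibly unreduced) word obtained by deleting from the reduced
word of `g` all letters of type `i` with `i ≥ m + 1`. -/
noncomputable def kappa {H : ℕ → Type*} [∀ i, Group (H i)] (m : ℕ) (g : Monoid.CoprodI H) :
    List (Σ i, H i) :=
  (redWord g).filter (fun l => decide (l.1 ≤ m))

/-- `ψ n`, extended to the whole free product: the homomorphism which is the identity on
each factor `H i` with `i ≤ n` and kills all factors `H i` with `i > n`. -/
noncomputable def psi {H : ℕ → Type*} [∀ i, Group (H i)] (n : ℕ) :
    Monoid.CoprodI H →* Monoid.CoprodI H :=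
  Monoid.CoprodI.lift (fun i => if i ≤ n then (Monoid.CoprodI.of : H i →* Monoid.CoprodI H) else 1)

/-- Each group `Gₙ` (and hence the big free product) is given the discrete topology. -/
instance (H : ℕ → Type*) [∀ i, Group (H i)] : TopologicalSpace (Monoid.CoprodI H) := ⊥

/-- The inverse limit `lim← Gₙ`:  sequences `(w₀, w₁, w₂, …)` with `wₙ ∈ Gₙ`
(i.e. the reduced word of `wₙ` uses only letters of type `i` with `1 ≤ i ≤ n`; the `n = 0`
term is the trivial dummy extension of the inverse system) satisfying `ψ n (w (n+1)) = w n`.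
As a subset of the product `Π n, CoprodI H` of discrete spaces it carries the product
(subspace) topology. -/
def invLim (H : ℕ → Type*) [∀ i, Group (H i)] : Set (ℕ → Monoid.CoprodI H) :=
  {f | (∀ n, ∀ l ∈ redWord (f n), 1 ≤ l.1 ∧ l.1 ≤ n) ∧ ∀ n, psi n (f (n + 1)) = f n}

/-- The fiber `σ⁻¹(N)`:  those `(wₙ) ∈ lim← Gₙ` such that `κ₁(wₙ) = κ₁(w_N)` for all
`n ≥ N`, and either `N = 1` or `κ₁(w_{N-1}) ≠ κ₁(w_N)`. -/
def sigmaFiber (H : ℕ → Type*) [∀ i, Group (H i)] (N : ℕ) : Set (invLim H) :=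
  {f | (∀ n, N ≤ n → kappa 1 (f.1 n) = kappa 1 (f.1 N)) ∧
    (N = 1 ∨ kappa 1 (f.1 (N - 1)) ≠ kappa 1 (f.1 N))}


/-- The subgroup `G ⊆ lim← Gₙ` of sequences `(wₙ)` such that for each `m ≥ 1` the
sequence of words `κ_m(w₁), κ_m(w₂), …` is eventually constant.  It carries the subspace
topology from `lim← Gₙ`. -/
def bigG (H : ℕ → Type*) [∀ i, Group (H i)] : Set (invLim H) :=
  {f | ∀ m, 1 ≤ m → ∃ N, ∀ n, N ≤ n → kappa m (f.1 n) = kappa m (f.1 N)}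

/-!
A neighbourhood of `(wₙ)` in `G` only constrains finitely many coordinates `w₁, …, w_N`.
Keep those for `n ≤ N` (with `N ≥ K`) and continue with the constant sequence
`h = w_N [t, x]`, where `t ∈ H_{N+1}` and `x ∈ H₁` are nontrivial. Since `ψ_N` kills `t`,
`h` lifts `w_N`, so this is a point of `G` in the neighbourhood; but the reduced word of `h`
is that of `w_N` followed by `t x t⁻¹ x⁻¹`, so `κ₁(h) = κ₁(w_N) x x⁻¹ ≠ κ₁(w_N)` and the
new point is not in `σ⁻¹(K)`.
-/

open Monoid.CoprodI Topology

theorem exists_forall_eq_imp_mem_of_mem_nhds {X : ℕ → Type*} [∀ n, TopologicalSpace (X n)]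
    {f : ∀ n, X n} {s : Set (∀ n, X n)} (hs : s ∈ 𝓝 f) :
    ∃ N, ∀ g, (∀ n ≤ N, g n = f n) → g ∈ s := by
  rw [nhds_pi, Filter.mem_pi] at hs
  obtain ⟨I, hI, t, ht, hts⟩ := hs
  obtain ⟨N, hN⟩ := hI.bddAbove
  refine ⟨N, fun g hg => hts fun n hn => ?_⟩
  rw [hg n (hN hn)]
  exact mem_of_mem_nhds (ht n)

section

variable {H : ℕ → Type*} [∀ i, Group (H i)]

theorem redWord_prod (w : Word H) : redWord w.prod = w.toList := by
  classical
  exact congrArg Word.toList (Word.equiv.apply_symm_apply w)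

theorem prod_map_redWord (g : Monoid.CoprodI H) :
    ((redWord g).map fun l => of l.2).prod = g := by
  classical
  exact Word.equiv.symm_apply_apply g

theorem psi_eq_self {n : ℕ} {g : Monoid.CoprodI H} (hg : ∀ l ∈ redWord g, l.1 ≤ n) :
    psi n g = g := by
  calc psi n g = psi n ((redWord g).map fun l => of l.2).prod := by rw [prod_map_redWord]
    _ = ((redWord g).map fun l => of l.2).prod := by
      rw [map_list_prod, List.map_map]
      exact congrArg _ (List.map_congr_left fun l hl => by simp [psi, hg l hl])
    _ = g := prod_map_redWord g

theorem redWord_mul_commutator {i j : ℕ} (hij : i ≠ j) {g : Monoid.CoprodI H}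
    (hg : ∀ l ∈ redWord g, l.1 ≠ j) {x : H i} (hx : x ≠ 1) {t : H j} (ht : t ≠ 1) :
    redWord (g * of t * of x * of t⁻¹ * of x⁻¹) =
      redWord g ++ [⟨j, t⟩, ⟨i, x⟩, ⟨j, t⁻¹⟩, ⟨i, x⁻¹⟩] := by
  classical
  let w : Word H :=
    { toList := redWord g ++ [⟨j, t⟩, ⟨i, x⟩, ⟨j, t⁻¹⟩, ⟨i, x⁻¹⟩]
      ne_one := by
        intro l hl
        rcases List.mem_append.mp hl with hl | hl
        · exact (Word.equiv g).ne_one l hl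
        · fin_cases hl <;> simp [hx, ht]
      chain_ne := by
        refine List.isChain_append.mpr ⟨(Word.equiv g).chain_ne, ?_, ?_⟩
        · simp [List.isChain_cons_cons, hij, hij.symm]
        · intro l hl l' hl'
          obtain rfl : l' = ⟨j, t⟩ := by simpa using hl'.symm
          exact hg l (List.mem_of_mem_getLast? hl) }
  have hw : w.prod = g * of t * of x * of t⁻¹ * of x⁻¹ := by
    simp [w, Word.prod, List.map_append, prod_map_redWord, mul_assoc]
  rw [← hw, redWord_prod]

theorem exists_psi_eq_kappa_ne {n : ℕ} (hn : 1 ≤ n) [Nontrivial (H 1)] [Nontrivial (H (n + 1))]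
    {g : Monoid.CoprodI H} (hg : ∀ l ∈ redWord g, 1 ≤ l.1 ∧ l.1 ≤ n) :
    ∃ h, (∀ l ∈ redWord h, 1 ≤ l.1 ∧ l.1 ≤ n + 1) ∧ psi n h = g ∧ kappa 1 h ≠ kappa 1 g := by
  obtain ⟨x, hx⟩ := exists_ne (1 : H 1)
  obtain ⟨t, ht⟩ := exists_ne (1 : H (n + 1))
  have hword := redWord_mul_commutator (by omega) (fun l hl => by have := hg l hl; omega) hx ht
  refine ⟨g * of t * of x * of t⁻¹ * of x⁻¹, ?_, ?_, ?_⟩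
  · rw [hword]
    intro l hl
    rcases List.mem_append.mp hl with hl | hl
    · have := hg l hl
      omega
    · fin_cases hl <;> simp
  · simp only [map_mul, psi_eq_self fun l hl => (hg l hl).2]
    simp [psi, hn]
  · rw [kappa, kappa, hword, List.filter_append, Ne, List.append_right_eq_self]
    simp

theorem bigG_exists_forall_eq_imp_mem_of_mem_nhds {f : bigG H} {s : Set (bigG H)}
    (hs : s ∈ 𝓝 f) : ∃ N, ∀ g : bigG H, (∀ n ≤ N, g.1.1 n = f.1.1 n) → g ∈ s := by
  have hind : IsInducing fun g : bigG H => g.1.1 :=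
    IsInducing.subtypeVal.comp IsInducing.subtypeVal
  rw [hind.nhds_eq_comap, Filter.mem_comap] at hs
  obtain ⟨t, ht, hts⟩ := hs
  obtain ⟨N, hN⟩ := exists_forall_eq_imp_mem_of_mem_nhds ht
  exact ⟨N, fun g hg => hts (hN _ hg)⟩

theorem exists_bigG_extend {f : ℕ → Monoid.CoprodI H} (hf : f ∈ invLim H) {n : ℕ}
    {h : Monoid.CoprodI H} (hh : ∀ l ∈ redWord h, 1 ≤ l.1 ∧ l.1 ≤ n + 1) (hpsi : psi n h = f n) :
    ∃ g : bigG H, (∀ k ≤ n, g.1.1 k = f k) ∧ g.1.1 (n + 1) = h := by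
  let F k := if k ≤ n then f k else h
  have hF : F ∈ invLim H := by
    refine ⟨fun k l hl => ?_, fun k => ?_⟩
    · by_cases hk : k ≤ n
      · simp only [F, if_pos hk] at hl
        exact hf.1 k l hl
      · simp only [F, if_neg hk] at hl
        have := hh l hl
        omega
    · rcases lt_trichotomy k n with hk | rfl | hk
      · simp only [F, if_pos (Nat.succ_le_of_lt hk), if_pos hk.le]
        exact hf.2 k
      · simpa [F] using hpsi
      · simp only [F, if_neg (show ¬k + 1 ≤ n by omega), if_neg hk.not_ge]
        exact psi_eq_self fun l hl => by have := hh l hl; omega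
  refine ⟨⟨⟨F, hF⟩, fun _ _ => ⟨n + 1, fun k hk => ?_⟩⟩, fun k hk => if_pos hk,
    if_neg (by omega)⟩
  simp only [F, if_neg (show ¬k ≤ n by omega), if_neg (show ¬n + 1 ≤ n by omega)]

end

/-- For each `K ≥ 1`, the set `σ⁻¹(K) ∩ G` has empty interior in `G`
(with the subspace topology from `lim← Gₙ`); i.e. it contains no nonempty open subset
of `G`. -/
theorem sigmaFiber_interior_empty (H : ℕ → Type*) [∀ i, Group (H i)]
    (hH : ∀ i, 1 ≤ i → Nontrivial (H i)) (K : ℕ) (hK : 1 ≤ K) :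
    interior {f : bigG H | (∀ n, K ≤ n → kappa 1 (f.1.1 n) = kappa 1 (f.1.1 K)) ∧
      (K = 1 ∨ kappa 1 (f.1.1 (K - 1)) ≠ kappa 1 (f.1.1 K))} = ∅ := by
  refine Set.eq_empty_of_forall_notMem fun f hf => ?_
  obtain ⟨N, hN⟩ := bigG_exists_forall_eq_imp_mem_of_mem_nhds (mem_interior_iff_mem_nhds.mp hf)
  set n := max N K
  have := hH 1 le_rfl
  have := hH (n + 1) (by omega)
  obtain ⟨h, h_mem, h_psi, h_kappa⟩ := exists_psi_eq_kappa_ne (by omega) (f.1.2.1 n)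
  obtain ⟨g, hg_eq, hg_succ⟩ := exists_bigG_extend f.1.2 h_mem h_psi
  have hg := hN g fun k hk => hg_eq k (by omega)
  apply h_kappa
  rw [← hg_succ, hg.1 (n + 1) (by omega), hg_eq K (le_max_right N K),
    (interior_subset hf).1 n (le_max_right N K)]

end
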